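/- arXiv:2003.10846 — 2 statements merged into one kernel-verified Lean document; each statement's English description precedes it below -/
import Mathlib

section
/- There do not exist positive integers b, d, c with c = 2*(d - b) + 1 such that (2(d-b)+1)^2 = (d-b)^2 + 3*(sqrt((d+1)(d+3)) - sqrt((b+1)(b+3)))^2, provided 3*(b+1)*(b+3) and 3*(d+1)*(d+3) are both perfect squares. -/
theorem stmt_16 : ¬ ∃ b d c : ℕ, 0 < b ∧ 0 < d ∧ 0 < c ∧ b < d ∧
    (c : ℝ) = 2 * ((d : ℝ) - b) + 1 ∧
    (∃ t : ℕ, 3 * (b + 1) * (b + 3) = t ^ 2) ∧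
    (∃ t : ℕ, 3 * (d + 1) * (d + 3) = t ^ 2) ∧
    (2 * ((d : ℝ) - b) + 1) ^ 2 = ((d : ℝ) - b) ^ 2 +
      3 * (Real.sqrt (((d : ℝ) + 1) * ((d : ℝ) + 3)) -
           Real.sqrt (((b : ℝ) + 1) * ((b : ℝ) + 3))) ^ 2 := by
  rintro ⟨b, d, c, hb, hd, hc, hbd, hceq, ⟨t, ht⟩, ⟨r, hr⟩, heq⟩
  have hV : (0:ℝ) ≤ ((b:ℝ)+1)*((b:ℝ)+3) := by positivity
  have hU : (0:ℝ) ≤ ((d:ℝ)+1)*((d:ℝ)+3) := by positivity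
  have ht' : ((t:ℝ))^2 = 3*((b:ℝ)+1)*((b:ℝ)+3) := by exact_mod_cast ht.symm
  have hr' : ((r:ℝ))^2 = 3*((d:ℝ)+1)*((d:ℝ)+3) := by exact_mod_cast hr.symm
  have hkey : (((d:ℝ)+1)*((d:ℝ)+3)) * (((b:ℝ)+1)*((b:ℝ)+3)) = ((t:ℝ)*(r:ℝ)/3)^2 := by
    field_simp
    nlinarith [ht', hr']
  have htr : Real.sqrt (((d:ℝ)+1)*((d:ℝ)+3)) * Real.sqrt (((b:ℝ)+1)*((b:ℝ)+3))
      = (t:ℝ)*(r:ℝ)/3 := by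
    rw [← Real.sqrt_mul hU, hkey, Real.sqrt_sq (by positivity)]
  have hsqU : (Real.sqrt (((d:ℝ)+1)*((d:ℝ)+3)))^2 = ((d:ℝ)+1)*((d:ℝ)+3) :=
    Real.sq_sqrt hU
  have hsqV : (Real.sqrt (((b:ℝ)+1)*((b:ℝ)+3)))^2 = ((b:ℝ)+1)*((b:ℝ)+3) :=
    Real.sq_sqrt hV
  have hfin : (2*(t:ℝ)*(r:ℝ) : ℝ) = 6*(b:ℝ)*(d:ℝ) + 8*(d:ℝ) + 16*(b:ℝ) + 17 := by
    have hexp : (Real.sqrt (((d:ℝ)+1)*((d:ℝ)+3)) - Real.sqrt (((b:ℝ)+1)*((b:ℝ)+3)))^2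
        = ((d:ℝ)+1)*((d:ℝ)+3) + ((b:ℝ)+1)*((b:ℝ)+3) - 2*((t:ℝ)*(r:ℝ)/3) := by
      rw [sub_sq, hsqU, hsqV, mul_assoc, htr]; ring
    rw [hexp] at heq
    linear_combination heq
  have hfin2 : (2*((t:ℝ)*(r:ℝ)) : ℝ) = 2*(3*((b:ℝ)*(d:ℝ))+4*(d:ℝ)+8*(b:ℝ)+8)+1 := by
    linarith [hfin]
  have hN : 2*(t*r) = 2*(3*(b*d)+4*d+8*b+8)+1 := by exact_mod_cast hfin2
  omega
end

section
/- There do not exist positive integers b, d such that 8*(d-b)^2 + 6*(d-b) + 1 = 8*(sqrt((d+1)(d+2)) - sqrt((b+1)(b+2)))^2, provided 2*(b+1)*(b+2) and 2*(d+1)*(d+2) are perfect squares. -/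
theorem stmt_17 : ¬ ∃ b d : ℕ, 0 < b ∧ 0 < d ∧ b < d ∧
    (∃ t : ℕ, 2 * (b + 1) * (b + 2) = t ^ 2) ∧
    (∃ t : ℕ, 2 * (d + 1) * (d + 2) = t ^ 2) ∧
    8 * ((d : ℝ) - b) ^ 2 + 6 * ((d : ℝ) - b) + 1 =
      8 * (Real.sqrt (((d : ℝ) + 1) * ((d : ℝ) + 2)) -
           Real.sqrt (((b : ℝ) + 1) * ((b : ℝ) + 2))) ^ 2 := by
  rintro ⟨b, d, hb, hd, hbd, ⟨t, ht⟩, ⟨u, hu⟩, heq⟩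
  -- t and u are even
  have htev : 2 ∣ t := by
    have : 2 ∣ t ^ 2 := ⟨(b + 1) * (b + 2), by linarith⟩
    exact (Nat.prime_two.dvd_of_dvd_pow this)
  have huev : 2 ∣ u := by
    have : 2 ∣ u ^ 2 := ⟨(d + 1) * (d + 2), by linarith⟩
    exact (Nat.prime_two.dvd_of_dvd_pow this)
  obtain ⟨s, rfl⟩ := htev
  obtain ⟨v, rfl⟩ := huev
  have hbs : (b + 1) * (b + 2) = 2 * s ^ 2 := by nlinarith
  have hdv : (d + 1) * (d + 2) = 2 * v ^ 2 := by nlinarith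
  have h2 : (0:ℝ) ≤ 2 := by norm_num
  have hsb : Real.sqrt (((b : ℝ) + 1) * ((b : ℝ) + 2)) = Real.sqrt 2 * s := by
    have : (((b : ℝ) + 1) * ((b : ℝ) + 2)) = 2 * (s:ℝ) ^ 2 := by exact_mod_cast congrArg (Nat.cast (R := ℝ)) hbs
    rw [this, Real.sqrt_mul h2, Real.sqrt_sq (by positivity)]
  have hsd : Real.sqrt (((d : ℝ) + 1) * ((d : ℝ) + 2)) = Real.sqrt 2 * v := by
    have : (((d : ℝ) + 1) * ((d : ℝ) + 2)) = 2 * (v:ℝ) ^ 2 := by exact_mod_cast congrArg (Nat.cast (R := ℝ)) hdv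
    rw [this, Real.sqrt_mul h2, Real.sqrt_sq (by positivity)]
  rw [hsb, hsd] at heq
  have hs2 : Real.sqrt 2 ^ 2 = 2 := Real.sq_sqrt h2
  have hreal : 8 * ((d : ℝ) - b) ^ 2 + 6 * ((d : ℝ) - b) + 1
      = 16 * ((v : ℝ) - s) ^ 2 := by
    rw [heq]; ring_nf; nlinarith [hs2]
  have key : 8 * ((d : ℤ) - b) ^ 2 + 6 * ((d : ℤ) - b) + 1
      = 16 * ((v : ℤ) - s) ^ 2 := by exact_mod_cast hreal
  generalize hP : ((d : ℤ) - b) ^ 2 = P at key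
  generalize hQ : ((v : ℤ) - s) ^ 2 = Q at key
  omega
end
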